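/- arXiv:2205.01046 — 7 statements merged into one kernel-verified Lean document; each statement's English description precedes it below -/
import Mathlib

section
/- Let K be a field of characteristic 2, A = K[x^{±1}, y^{±1}] the ring of Laurent polynomials in two variables over K, and W = x + y + x⁻¹y⁻¹ ∈ A. Let Q be the 4×4 matrix over A with rows (0, 1, 1, x⁻¹y⁻¹), (y, 0, x⁻¹, 1), (x, y⁻¹, 0, 1), (1, x, y, 0). Then Q² = W · Id₄; that is, Q is an ungraded matrix factorization of W. -/
/- Laurent polynomials in two variables over `K`: `A = K[x^{±1}, y^{±1}]`,
realized as the monoid algebra of `ℤ × ℤ` over `K`.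
`mon K i j` is the monomial `x^i y^j`. -/

noncomputable section

/-- The Laurent polynomial ring `K[x^{±1}, y^{±1}]`. -/
abbrev LaurentTwo (K : Type*) [Field K] := AddMonoidAlgebra K (ℤ × ℤ)

/-- The monomial `x^i y^j` in `K[x^{±1}, y^{±1}]`. -/
def mon (K : Type*) [Field K] (i j : ℤ) : LaurentTwo K := AddMonoidAlgebra.single (i, j) 1

/-- The Givental–Hori–Vafa potential `W = x + y + x⁻¹y⁻¹`. -/
def Wpot (K : Type*) [Field K] : LaurentTwo K := mon K 1 0 + mon K 0 1 + mon K (-1) (-1)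

/-- The mirror matrix of `ℝP²`. -/
def Qrp2 (K : Type*) [Field K] : Matrix (Fin 4) (Fin 4) (LaurentTwo K) :=
  !![0,           1,            1,            mon K (-1) (-1);
     mon K 0 1,   0,            mon K (-1) 0, 1;
     mon K 1 0,   mon K 0 (-1), 0,            1;
     1,           mon K 1 0,    mon K 0 1,    0]

lemma mon_mul (K : Type*) [Field K] (i j k l : ℤ) : mon K i j * mon K k l = mon K (i+k) (j+l) := by
  simp [mon, AddMonoidAlgebra.single_mul_single, Prod.mk_add_mk]

lemma mon_zero (K : Type*) [Field K] : mon K 0 0 = 1 := by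
  simp [mon]; rfl

lemma char2 (K : Type*) [Field K] [CharP K 2] (a : LaurentTwo K) : a + a = 0 := by
  rw [← two_smul K a, show (2:K) = 0 from by exact_mod_cast CharP.cast_eq_zero K 2, zero_smul]

/-- `Q` is an ungraded matrix factorization of `W = x + y + x⁻¹y⁻¹`:
`Q² = W · Id₄`. -/
theorem Qrp2_sq (K : Type*) [Field K] [CharP K 2] :
    Qrp2 K * Qrp2 K = Wpot K • (1 : Matrix (Fin 4) (Fin 4) (LaurentTwo K)) := by
  ext i j
  fin_cases i <;> fin_cases j <;>
    simp [Qrp2, Wpot, Matrix.mul_apply, Fin.sum_univ_four, mon_mul, mon_zero,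
      Matrix.smul_apply, Matrix.one_apply, char2] <;>
    abel

end
end

section
/- Let K be a field of characteristic 2 and A = K[x^{±1}, y^{±1}]. The Jacobian ring Jac(W) of W = x + y + x⁻¹y⁻¹, i.e. the quotient of A by the ideal generated by 1 + x⁻²y⁻¹ and 1 + x⁻¹y⁻², is isomorphic as a K-algebra to K[X]/(X³ − 1), via the map induced by sending both x and y to the class of X. -/
/-! In characteristic 2 the relations of `Jac(W)` say that the units `x`, `y` satisfy
`x²y = xy² = 1`. Hence `x = y` and `x³ = 1`, so every monomial `x^i y^j` becomes `x^(i+j)`, and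
`Jac(W)` is generated by `x` subject to `x³ = 1` alone. Conversely `x^i y^j ↦ X^(i+j)` respects
the relations, which gives the inverse map. -/

noncomputable section

/-- The Jacobian ideal of `W = x + y + x⁻¹y⁻¹`, generated by the formal partial
derivatives `∂W/∂x = 1 + x⁻²y⁻¹` and `∂W/∂y = 1 + x⁻¹y⁻²` (signs are irrelevant in
characteristic 2). -/
def jacIdeal (K : Type*) [Field K] : Ideal (LaurentTwo K) :=
  Ideal.span {1 + mon K (-2) (-1), 1 + mon K (-1) (-2)}

open Multiplicative

section ZPowSum

variable {G : Type*} [Group G]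

def zpowSumHom (g : G) : Multiplicative (ℤ × ℤ) →* G :=
  (zpowersHom G g).comp
    (AddMonoidHom.toMultiplicative (AddMonoidHom.fst ℤ ℤ + AddMonoidHom.snd ℤ ℤ))

@[simp]
lemma zpowSumHom_ofAdd (g : G) (p : ℤ × ℤ) : zpowSumHom g (ofAdd p) = g ^ (p.1 + p.2) := rfl

variable {f : Multiplicative (ℤ × ℤ) →* G}

lemma eq_zpowSumHom_of_map_eq_one (h₁ : f (ofAdd (-2, -1)) = 1) (h₂ : f (ofAdd (-1, -2)) = 1) :
    f = zpowSumHom (f (ofAdd (1, 0))) := by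
  have hdiag : f (ofAdd (-1, 1)) = 1 := by
    rw [show ((-1, 1) : ℤ × ℤ) = (-2, -1) - (-1, -2) by rfl, ofAdd_sub, map_div, h₁, h₂, div_one]
  refine MonoidHom.ext fun p ↦ ?_
  induction p using Multiplicative.rec with | ofAdd q => ?_
  obtain ⟨i, j⟩ := q
  have hp : ofAdd (i, j) = ofAdd (1, 0) ^ (i + j) * ofAdd (-1, 1) ^ j := by
    rw [← ofAdd_zsmul, ← ofAdd_zsmul, ← ofAdd_add]
    congr 1
    ext <;> simp
  rw [zpowSumHom_ofAdd, hp, map_mul, map_zpow, map_zpow, hdiag, one_zpow, mul_one]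

lemma map_ofAdd_one_zero_pow_three_of_map_eq_one (h₁ : f (ofAdd (-2, -1)) = 1)
    (h₂ : f (ofAdd (-1, -2)) = 1) : f (ofAdd (1, 0)) ^ 3 = 1 := by
  have h := DFunLike.congr_fun (eq_zpowSumHom_of_map_eq_one h₁ h₂) (ofAdd (-2, -1))
  rw [h₁, zpowSumHom_ofAdd] at h
  rw [← inv_eq_one, ← zpow_neg_one, ← zpow_natCast, ← zpow_mul]
  exact h.symm

end ZPowSum

open Polynomial

lemma AdjoinRoot.root_X_pow_sub_one_pow (R : Type*) [CommRing R] (n : ℕ) :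
    root (X ^ n - 1 : R[X]) ^ n = 1 := by
  rw [← sub_eq_zero, ← mk_X, ← map_pow, ← map_one (mk _), ← map_sub, mk_self]

lemma ofNat_two_eq_zero_of_charTwo (K R : Type*) [Field K] [CharP K 2] [Semiring R]
    [Algebra K R] : (2 : R) = 0 := by
  rw [← map_ofNat (algebraMap K R) 2, CharTwo.two_eq_zero, map_zero]

section Jacobian

variable (K : Type*) [Field K]

lemma mon_eq_of (i j : ℤ) : mon K i j = AddMonoidAlgebra.of K (ℤ × ℤ) (ofAdd (i, j)) := rfl

def jacMonUnit : Multiplicative (ℤ × ℤ) →* (LaurentTwo K ⧸ jacIdeal K)ˣ :=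
  ((Ideal.Quotient.mk (jacIdeal K) : LaurentTwo K →* _).comp
    (AddMonoidAlgebra.of K (ℤ × ℤ))).toHomUnits

lemma val_jacMonUnit_ofAdd (i j : ℤ) :
    (jacMonUnit K (ofAdd (i, j)) : LaurentTwo K ⧸ jacIdeal K) =
      Ideal.Quotient.mk (jacIdeal K) (mon K i j) := rfl

variable [CharP K 2]

lemma jacMonUnit_eq_one_of_one_add_mem {i j : ℤ} (h : 1 + mon K i j ∈ jacIdeal K) :
    jacMonUnit K (ofAdd (i, j)) = 1 := by
  have h2 := ofNat_two_eq_zero_of_charTwo K (LaurentTwo K ⧸ jacIdeal K)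
  have h0 := Ideal.Quotient.eq_zero_iff_mem.mpr h
  rw [map_add, map_one] at h0
  ext
  rw [val_jacMonUnit_ofAdd, Units.val_one]
  linear_combination h0 - h2

lemma jacMonUnit_relations :
    jacMonUnit K (ofAdd (-2, -1)) = 1 ∧ jacMonUnit K (ofAdd (-1, -2)) = 1 :=
  ⟨jacMonUnit_eq_one_of_one_add_mem K (Ideal.subset_span (Or.inl rfl)),
    jacMonUnit_eq_one_of_one_add_mem K (Ideal.subset_span (Or.inr rfl))⟩

end Jacobian

section Cubic

variable (K : Type*) [Field K]

-- `AdjoinRoot (X ^ 3 - 1)` is by definition the ring `K[X] ⧸ span {X ^ 3 - 1}` of `jac_iso`.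
def cubicRootUnit : (AdjoinRoot (X ^ 3 - 1 : K[X]))ˣ :=
  Units.ofPowEqOne _ 3 (AdjoinRoot.root_X_pow_sub_one_pow K 3) three_ne_zero

def laurentToCubic : LaurentTwo K →ₐ[K] AdjoinRoot (X ^ 3 - 1 : K[X]) :=
  AddMonoidAlgebra.lift K _ _ ((Units.coeHom _).comp (zpowSumHom (cubicRootUnit K)))

lemma laurentToCubic_mon (i j : ℤ) :
    laurentToCubic K (mon K i j) = (cubicRootUnit K ^ (i + j) : (AdjoinRoot _)ˣ) := by
  rw [mon_eq_of, laurentToCubic, AddMonoidAlgebra.lift_of]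
  rfl

variable [CharP K 2]

lemma jacIdeal_le_ker_laurentToCubic : jacIdeal K ≤ RingHom.ker (laurentToCubic K) := by
  have h3 : cubicRootUnit K ^ (-3 : ℤ) = 1 := by
    rw [zpow_neg, inv_eq_one]
    exact_mod_cast Units.pow_ofPowEqOne _ three_ne_zero
  rw [jacIdeal, Ideal.span_le]
  rintro g (rfl | rfl) <;>
  · rw [SetLike.mem_coe, RingHom.mem_ker, map_add, map_one, laurentToCubic_mon]
    norm_num [h3]
    exact ofNat_two_eq_zero_of_charTwo K _

def jacToCubic : (LaurentTwo K ⧸ jacIdeal K) →ₐ[K] AdjoinRoot (X ^ 3 - 1 : K[X]) :=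
  Ideal.Quotient.liftₐ _ (laurentToCubic K) fun _ ha ↦ jacIdeal_le_ker_laurentToCubic K ha

def cubicToJac : AdjoinRoot (X ^ 3 - 1 : K[X]) →ₐ[K] LaurentTwo K ⧸ jacIdeal K :=
  AdjoinRoot.liftAlgHom _ (Algebra.ofId K _) (jacMonUnit K (ofAdd (1, 0))) <| by
    have h := map_ofAdd_one_zero_pow_three_of_map_eq_one (jacMonUnit_relations K).1
      (jacMonUnit_relations K).2
    simp [← Units.val_pow_eq_pow_val, h]

lemma jacToCubic_mk_mon_of_add_eq_one {i j : ℤ} (h : i + j = 1) :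
    jacToCubic K (Ideal.Quotient.mk _ (mon K i j)) = AdjoinRoot.root _ := by
  change laurentToCubic K _ = _
  rw [laurentToCubic_mon, h, zpow_one]
  rfl

lemma cubicToJac_root : cubicToJac K (AdjoinRoot.root _) = Ideal.Quotient.mk _ (mon K 1 0) :=
  AdjoinRoot.liftAlgHom_root ..

lemma cubicToJac_cubicRootUnit_zpow (n : ℤ) :
    cubicToJac K (cubicRootUnit K ^ n : (AdjoinRoot _)ˣ) =
      (jacMonUnit K (ofAdd (1, 0)) ^ n : _ˣ) := by
  have h : Units.map (cubicToJac K : AdjoinRoot (X ^ 3 - 1 : K[X]) →* _) (cubicRootUnit K) =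
      jacMonUnit K (ofAdd (1, 0)) :=
    Units.ext (cubicToJac_root K)
  rw [← h, ← map_zpow]
  rfl

lemma jacToCubic_comp_cubicToJac : (jacToCubic K).comp (cubicToJac K) = AlgHom.id K _ :=
  AdjoinRoot.algHom_ext <| by
    rw [AlgHom.comp_apply, cubicToJac_root, jacToCubic_mk_mon_of_add_eq_one K (add_zero 1),
      AlgHom.id_apply]

lemma cubicToJac_comp_jacToCubic : (cubicToJac K).comp (jacToCubic K) = AlgHom.id K _ := by
  apply Ideal.Quotient.algHom_ext
  refine AddMonoidAlgebra.algHom_ext (fun ⟨i, j⟩ ↦ ?_) (Subsingleton.elim _ _)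
  change cubicToJac K (laurentToCubic K (mon K i j)) = Ideal.Quotient.mk _ (mon K i j)
  rw [laurentToCubic_mon, cubicToJac_cubicRootUnit_zpow, ← val_jacMonUnit_ofAdd,
    DFunLike.congr_fun (eq_zpowSumHom_of_map_eq_one (jacMonUnit_relations K).1
      (jacMonUnit_relations K).2) (ofAdd (i, j)), zpowSumHom_ofAdd]

end Cubic

/-- `Jac(W) ≅ K[X]/(X³ − 1)` as `K`-algebras, via the map sending
both `x` and `y` to the class of `X`. -/
theorem jac_iso (K : Type*) [Field K] [CharP K 2] :
    ∃ e : (LaurentTwo K ⧸ jacIdeal K) ≃ₐ[K]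
        (Polynomial K ⧸ Ideal.span {(Polynomial.X : Polynomial K) ^ 3 - 1}),
      e (Ideal.Quotient.mk (jacIdeal K) (mon K 1 0)) =
        Ideal.Quotient.mk (Ideal.span {(Polynomial.X : Polynomial K) ^ 3 - 1}) Polynomial.X ∧
      e (Ideal.Quotient.mk (jacIdeal K) (mon K 0 1)) =
        Ideal.Quotient.mk (Ideal.span {(Polynomial.X : Polynomial K) ^ 3 - 1}) Polynomial.X :=
  ⟨AlgEquiv.ofAlgHom (jacToCubic K) (cubicToJac K) (jacToCubic_comp_cubicToJac K)
      (cubicToJac_comp_jacToCubic K),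
    jacToCubic_mk_mon_of_add_eq_one K (add_zero 1), jacToCubic_mk_mon_of_add_eq_one K (zero_add 1)⟩

end
end

section
/- Let K be a field of characteristic 2, A = K[x^{±1}, y^{±1}], and let Q be the 4×4 matrix over A with rows (0, 1, 1, x⁻¹y⁻¹), (y, 0, x⁻¹, 1), (x, y⁻¹, 0, 1), (1, x, y, 0). If α ∈ A is such that α · Id₄ = Qf + fQ for some f ∈ M₄(A), then α lies in the ideal of A generated by 1 + x⁻¹y⁻² and 1 + x⁻²y⁻¹ (the Jacobian ideal of W = x + y + x⁻¹y⁻¹). -/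
/-!
If `P` has trace `1`, then `α = tr (P · α Id) = tr (P (Qf + fQ)) = tr ((PQ + QP) f)`, so it
suffices to exhibit a `P` of trace `1` whose anticommutator with `Q` has all entries in the
Jacobian ideal `J`. In characteristic 2, modulo `J` the monomial `x^i y^j` only depends on
`i + j mod 3`: the exponents `(a, b)` with `x^a y^b ≡ 1` form a subgroup of `ℤ²` containing
`(-1, -2)` and `(-2, -1)`, which generate `{(a, b) | 3 ∣ a + b}`.
-/

noncomputable section

open Matrix AddMonoidAlgebra

theorem Matrix.mem_of_smul_one_eq_anticommutator {n R : Type*} [Fintype n] [DecidableEq n]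
    [CommSemiring R] {I : Ideal R} {P Q f : Matrix n n R} {α : R} (hP : P.trace = 1)
    (hPQ : ∀ i j, (P * Q + Q * P) i j ∈ I) (h : α • 1 = Q * f + f * Q) : α ∈ I := by
  have hα : α = trace ((P * Q + Q * P) * f) := calc
    α = trace (P * (α • 1)) := by
      rw [Matrix.mul_smul, Matrix.mul_one, trace_smul, hP, smul_eq_mul, mul_one]
    _ = trace (P * Q * f) + trace (P * f * Q) := by
      rw [h, mul_add, trace_add, ← Matrix.mul_assoc, ← Matrix.mul_assoc]
    _ = trace ((P * Q + Q * P) * f) := by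
      rw [trace_mul_comm (P * f), add_mul, trace_add, ← Matrix.mul_assoc]
  rw [hα]
  exact Ideal.sum_mem _ fun i _ => Ideal.sum_mem _ fun j _ => I.mul_mem_right _ (hPQ i j)

namespace AddMonoidAlgebra

variable {k G : Type*} [CommRing k] [AddCommGroup G]

def congrOneSubgroup (I : Ideal k[G]) : AddSubgroup G where
  carrier := {g | single g 1 - 1 ∈ I}
  zero_mem' := by simp [← one_def]
  add_mem' {a b} ha hb := by
    have : single (a + b) (1 : k) - 1 = (single a 1 - 1) * single b 1 + (single b 1 - 1) := by
      rw [sub_mul, single_mul_single, one_mul, one_mul]; ring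
    rw [Set.mem_ofPred_eq, this]
    exact I.add_mem (I.mul_mem_right _ ha) hb
  neg_mem' {a} ha := by
    have : single (-a) (1 : k) - 1 = -single (-a) 1 * (single a 1 - 1) := by
      rw [neg_mul, mul_sub, single_mul_single, neg_add_cancel, one_mul, ← one_def]; ring
    rw [Set.mem_ofPred_eq, this]
    exact I.mul_mem_left _ ha

theorem mem_congrOneSubgroup {I : Ideal k[G]} {g : G} :
    g ∈ congrOneSubgroup I ↔ single g 1 - 1 ∈ I :=
  Iff.rfl

end AddMonoidAlgebra

section Qrp2

variable (K : Type*) [Field K]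

def Qrp2Anticommutant : Matrix (Fin 4) (Fin 4) (LaurentTwo K) :=
  !![1,         0, mon K 1 0, 0;
     mon K 2 0, 0, 1,         0;
     0,         0, 0,         0;
     0,         0, 0,         0]

theorem trace_Qrp2Anticommutant : (Qrp2Anticommutant K).trace = 1 := by
  simp [Qrp2Anticommutant, Matrix.trace, Fin.sum_univ_four]

variable {K}

theorem mon_mul_mon (i j k l : ℤ) : mon K i j * mon K k l = mon K (i + k) (j + l) := by
  rw [mon, mon, single_mul_single, one_mul]; rfl

theorem mon_zero_zero : mon K 0 0 = 1 :=
  rfl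

variable (K) [CharP K 2]

instance : CharP (LaurentTwo K) 2 :=
  charP_of_injective_algebraMap single_right_injective 2

def jacobianIdeal : Ideal (LaurentTwo K) :=
  Ideal.span {1 + mon K (-1) (-2), 1 + mon K (-2) (-1)}

variable {K}

theorem mon_add_mon_mem_jacobianIdeal {i j k l : ℤ} (h : i + j ≡ k + l [ZMOD 3]) :
    mon K i j + mon K k l ∈ jacobianIdeal K := by
  obtain ⟨c, hc⟩ := h.symm.dvd
  have generator_mem (a b : ℤ) (hab : 1 + mon K a b ∈ jacobianIdeal K) :
      (a, b) ∈ congrOneSubgroup (jacobianIdeal K) := by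
    rwa [mem_congrOneSubgroup, CharTwo.sub_eq_add, add_comm]
  have hmem : (i - k, j - l) ∈ congrOneSubgroup (jacobianIdeal K) := by
    have hdecomp : (i - k, j - l) =
        (i - k - 2 * c) • ((-1, -2) : ℤ × ℤ) + (j - l - 2 * c) • (-2, -1) := by
      ext <;> simp <;> linarith
    rw [hdecomp]
    exact add_mem (zsmul_mem (generator_mem _ _ (Ideal.subset_span (by simp))) _)
      (zsmul_mem (generator_mem _ _ (Ideal.subset_span (by simp))) _)
  have hfactor : mon K i j + mon K k l = mon K k l * (single (i - k, j - l) 1 - 1) := by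
    rw [mul_sub, mul_one, ← mon, mon_mul_mon, CharTwo.sub_eq_add,
      add_sub_cancel, add_sub_cancel, add_comm]
  rw [hfactor]
  exact Ideal.mul_mem_left _ _ hmem

theorem anticommutator_Qrp2Anticommutant :
    Qrp2Anticommutant K * Qrp2 K + Qrp2 K * Qrp2Anticommutant K =
      !![0, mon K 0 0 + mon K 1 (-1), 0, mon K (-1) (-1) + mon K 1 0;
         mon K 1 0 + mon K 0 1, mon K 2 0 + mon K 0 (-1), mon K 2 0 + mon K 1 1,
           mon K 1 (-1) + mon K 0 0;
         mon K 1 0 + mon K 2 (-1), 0, mon K 2 0 + mon K 0 (-1), 0;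
         mon K 0 0 + mon K 3 0, 0, 0, 0] := by
  ext i j : 1
  fin_cases i <;> fin_cases j <;>
    simp [Qrp2Anticommutant, Qrp2, mon_mul_mon, mon_zero_zero, CharTwo.add_self_eq_zero]

theorem anticommutator_Qrp2Anticommutant_mem_jacobianIdeal (i j : Fin 4) :
    (Qrp2Anticommutant K * Qrp2 K + Qrp2 K * Qrp2Anticommutant K) i j ∈ jacobianIdeal K := by
  rw [anticommutator_Qrp2Anticommutant]
  fin_cases i <;> fin_cases j <;>
    first
      | exact Ideal.zero_mem _
      | exact mon_add_mon_mem_jacobianIdeal (by decide)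

end Qrp2

/-- If `α·Id₄` is exact, i.e. `α·Id₄ = Qf + fQ` for some `f ∈ M₄(A)`,
then `α` lies in the Jacobian ideal of `W = x + y + x⁻¹y⁻¹`, the ideal generated by
`1 + x⁻¹y⁻²` and `1 + x⁻²y⁻¹`. -/
theorem scalar_exact_mem_jacobian (K : Type*) [Field K] [CharP K 2]
    (α : LaurentTwo K) (f : Matrix (Fin 4) (Fin 4) (LaurentTwo K))
    (h : α • (1 : Matrix (Fin 4) (Fin 4) (LaurentTwo K)) = Qrp2 K * f + f * Qrp2 K) :
    α ∈ Ideal.span ({1 + mon K (-1) (-2), 1 + mon K (-2) (-1)} : Set (LaurentTwo K)) :=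
  mem_of_smul_one_eq_anticommutator (trace_Qrp2Anticommutant K)
    anticommutator_Qrp2Anticommutant_mem_jacobianIdeal h

end
end

section
/- Let R be a commutative ring, D : R → R a derivation, W ∈ R, and Q an m×m matrix over R with Q² = W · Id_m. If D(W) is a unit of R, then there exists an m×m matrix M over R with Q·M + M·Q = Id_m (namely M = D(W)⁻¹ · D(Q)); in other words, the identity endomorphism of the ungraded matrix factorization (R^m, Q) is exact, so its cohomology vanishes. -/
/-! Differentiating `Q * Q = W • 1` entrywise with the Leibniz rule gives
`Q * D(Q) + D(Q) * Q = D(W) • 1`, so when `D(W)` is a unit, `D(W)⁻¹ • D(Q)` is a contracting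
homotopy for the identity of the matrix factorization `Q`. -/

def Derivation.ofAddLeibniz {R : Type*} [CommRing R] (D : R → R)
    (hadd : ∀ a b : R, D (a + b) = D a + D b)
    (hLeibniz : ∀ a b : R, D (a * b) = a * D b + D a * b) : Derivation ℤ R R :=
  Derivation.mk' (AddMonoidHom.mk' D hadd).toIntLinearMap fun a b => by
    simp [hLeibniz, mul_comm b]

namespace Derivation

variable {S A : Type*} [CommSemiring S] [CommSemiring A] [Algebra S A] (D : Derivation S A A)
  {n : Type*}

theorem map_matrix_mul [Fintype n] (P Q : Matrix n n A) :
    (P * Q).map D = P * Q.map D + P.map D * Q := by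
  ext i j
  simp only [Matrix.map_apply, Matrix.mul_apply, Matrix.add_apply, map_sum, leibniz,
    smul_eq_mul, ← Finset.sum_add_distrib, mul_comm (Q _ j)]

theorem map_smul_one [DecidableEq n] (W : A) : (W • (1 : Matrix n n A)).map D = D W • 1 := by
  rw [Matrix.smul_one_eq_diagonal, Matrix.diagonal_map D.map_zero, Matrix.smul_one_eq_diagonal]

theorem mul_map_add_map_mul_of_mul_self_eq_smul_one [Fintype n] [DecidableEq n] {W : A}
    {Q : Matrix n n A} (hQ : Q * Q = W • 1) : Q * Q.map D + Q.map D * Q = D W • 1 := by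
  rw [← map_matrix_mul, hQ, map_smul_one]

end Derivation

/-- For a commutative ring `R`, a derivation `D : R → R`, `W ∈ R`, and
an `m×m` matrix `Q` with `Q² = W·Id`: if `D(W)` is a unit, then there is a matrix `M`
(namely `M = D(W)⁻¹ · D(Q)`) with `Q·M + M·Q = Id`, i.e. the identity endomorphism of
the ungraded matrix factorization `(Rᵐ, Q)` is exact, so its cohomology vanishes. -/
theorem derivation_unit_identity_exact {R : Type*} [CommRing R]
    (D : R → R)
    (hadd : ∀ a b : R, D (a + b) = D a + D b)
    (hLeibniz : ∀ a b : R, D (a * b) = a * D b + D a * b)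
    {m : ℕ} (W : R) (Q : Matrix (Fin m) (Fin m) R)
    (hQ : Q * Q = W • (1 : Matrix (Fin m) (Fin m) R))
    (hW : IsUnit (D W)) :
    ∃ M : Matrix (Fin m) (Fin m) R,
      M = ((hW.unit⁻¹ : Rˣ) : R) • Q.map D ∧
      Q * M + M * Q = (1 : Matrix (Fin m) (Fin m) R) := by
  have hDQ : Q * Q.map D + Q.map D * Q = D W • 1 :=
    (Derivation.ofAddLeibniz D hadd hLeibniz).mul_map_add_map_mul_of_mul_self_eq_smul_one hQ
  refine ⟨_, rfl, ?_⟩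
  rw [Matrix.mul_smul, Matrix.smul_mul, ← smul_add, hDQ, smul_smul, IsUnit.val_inv_mul, one_smul]
end

section
/- Let R be a commutative ring, D : R → R a derivation, W ∈ R, Q a k×k matrix over R with Q² = W · Id_k, and Q' an m×m matrix over R with Q'² = W · Id_m. If an m×k matrix f over R satisfies Q'·f = f·Q (i.e. f is a closed morphism from (R^k, Q) to (R^m, Q')), then D(W)·f is exact: D(W)·f = Q'·(f·D(Q)) + (f·D(Q))·Q. Consequently the Jacobian ring of W acts on the cohomology of morphism spaces between ungraded matrix factorizations of W. -/
/-!
Differentiating `Q * Q = W • 1` entrywise with the Leibniz rule gives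
`Q * D(Q) + D(Q) * Q = D(W) • 1`, i.e. `D(Q)` is a null-homotopy of multiplication by `D(W)` on
`(R^k, Q)`. Precomposing with a closed morphism `f` and moving `Q'` past `f` turns this into the
null-homotopy `f * D(Q)` of `D(W) • f`.
-/

namespace Matrix

variable {l n o R : Type*}

theorem map_mul_of_leibniz [Fintype n] [NonUnitalNonAssocSemiring R] (D : R →+ R)
    (hD : ∀ a b : R, D (a * b) = a * D b + D a * b) (A : Matrix l n R) (B : Matrix n o R) :
    (A * B).map D = A * B.map D + A.map D * B := by
  ext i j
  simp only [map_apply, mul_apply, add_apply, map_sum, hD, Finset.sum_add_distrib]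

theorem map_smul_one [DecidableEq n] [Semiring R] {D : R → R} (hD : D 0 = 0) (c : R) :
    (c • (1 : Matrix n n R)).map D = D c • 1 := by
  rw [smul_one_eq_diagonal, smul_one_eq_diagonal, diagonal_map hD]

theorem mul_map_add_map_mul_of_mul_self_eq [Fintype n] [DecidableEq n] [Semiring R]
    (D : R →+ R) (hD : ∀ a b : R, D (a * b) = a * D b + D a * b)
    {W : R} {Q : Matrix n n R} (hQ : Q * Q = W • 1) :
    Q * Q.map D + Q.map D * Q = D W • 1 := by
  rw [← map_mul_of_leibniz D hD, hQ, map_smul_one (map_zero D)]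

theorem smul_eq_mul_add_mul_of_mul_eq_mul [Fintype n] [Fintype o] [DecidableEq n] [CommSemiring R]
    {c : R} {Q : Matrix n n R} {H : Matrix n n R} (hH : Q * H + H * Q = c • 1)
    {Q' : Matrix o o R} {f : Matrix o n R} (hf : Q' * f = f * Q) :
    c • f = Q' * (f * H) + f * H * Q :=
  calc c • f = f * (Q * H + H * Q) := by rw [hH, Matrix.mul_smul, Matrix.mul_one]
    _ = Q' * (f * H) + f * H * Q := by
      rw [Matrix.mul_add, ← Matrix.mul_assoc, ← hf, Matrix.mul_assoc, Matrix.mul_assoc]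

end Matrix

theorem jacobian_acts_on_morphisms_general {R : Type*} [CommRing R]
    (D : R → R)
    (hadd : ∀ a b : R, D (a + b) = D a + D b)
    (hLeibniz : ∀ a b : R, D (a * b) = a * D b + D a * b)
    {k m : ℕ} (W : R)
    (Q : Matrix (Fin k) (Fin k) R) (hQ : Q * Q = W • (1 : Matrix (Fin k) (Fin k) R))
    (Q' : Matrix (Fin m) (Fin m) R)
    (f : Matrix (Fin m) (Fin k) R) (hf : Q' * f = f * Q) :
    D W • f = Q' * (f * Q.map D) + (f * Q.map D) * Q :=
  Matrix.smul_eq_mul_add_mul_of_mul_eq_mul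
    (Matrix.mul_map_add_map_mul_of_mul_self_eq (AddMonoidHom.mk' D hadd) hLeibniz hQ) hf

/-- Let `R` be a commutative ring, `D : R → R` a derivation, `W ∈ R`,
`Q` a `k×k` matrix with `Q² = W·Id` and `Q'` an `m×m` matrix with `Q'² = W·Id`. If an
`m×k` matrix `f` satisfies `Q'·f = f·Q` (a closed morphism from `(R^k, Q)` to
`(R^m, Q')`), then `D(W)·f` is exact: `D(W)·f = Q'·(f·D(Q)) + (f·D(Q))·Q`.
Consequently the Jacobian ring of `W` acts on the cohomology of morphism spaces
between ungraded matrix factorizations of `W`. -/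
theorem jacobian_acts_on_morphisms {R : Type*} [CommRing R]
    (D : R → R)
    (hadd : ∀ a b : R, D (a + b) = D a + D b)
    (hLeibniz : ∀ a b : R, D (a * b) = a * D b + D a * b)
    {k m : ℕ} (W : R)
    (Q : Matrix (Fin k) (Fin k) R) (hQ : Q * Q = W • (1 : Matrix (Fin k) (Fin k) R))
    (Q' : Matrix (Fin m) (Fin m) R) (hQ' : Q' * Q' = W • (1 : Matrix (Fin m) (Fin m) R))
    (f : Matrix (Fin m) (Fin k) R) (hf : Q' * f = f * Q) :
    D W • f = Q' * (f * Q.map D) + (f * Q.map D) * Q :=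
  jacobian_acts_on_morphisms_general D hadd hLeibniz W Q hQ Q' f hf
end

section
/- Let K be a field of characteristic 2, n ≥ 1, and let Q be the 2×2 matrix over K[x,y,z] with rows (xⁿ, y) and (y + xz, xⁿ), an ungraded matrix factorization of W = x^{2n} + y² + xyz. Then the endomorphism algebra End_H(Q) — the K-algebra of matrices F ∈ M₂(K[x,y,z]) with QF = FQ, modulo matrices of the form QG + GQ — is isomorphic as a K-algebra to K[x,z]/(xz). -/
open MvPolynomial

noncomputable section

variable (K : Type*) [Field K] [CharP K 2] (n : ℕ)

/-- The matrix factorization `Q = [[xⁿ, y], [y + xz, xⁿ]]` of `W = x^{2n} + y² + xyz`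
over `K[x,y,z]`. -/
def Qmil : Matrix (Fin 2) (Fin 2) (MvPolynomial (Fin 3) K) :=
  !![(X 0 : MvPolynomial (Fin 3) K) ^ n, X 1; X 1 + X 0 * X 2, X 0 ^ n]

lemma mat_add_self (M : Matrix (Fin 2) (Fin 2) (MvPolynomial (Fin 3) K)) : M + M = 0 := by
  refine Matrix.ext fun i j => ?_
  simpa using CharTwo.add_self_eq_zero (M i j)

lemma closed_iff (F : Matrix (Fin 2) (Fin 2) (MvPolynomial (Fin 3) K)) :
    Qmil K n * F + F * Qmil K n = 0 ↔ Qmil K n * F = F * Qmil K n := by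
  constructor
  · intro h
    have h1 : Qmil K n * F + F * Qmil K n + F * Qmil K n = F * Qmil K n := by
      rw [h, zero_add]
    rwa [add_assoc, mat_add_self, add_zero] at h1
  · intro h; rw [h, mat_add_self]

/-- The `K`-algebra of closed matrices: `F ∈ M₂(K[x,y,z])` with `QF + FQ = 0`. -/
def closedAlg : Subalgebra K (Matrix (Fin 2) (Fin 2) (MvPolynomial (Fin 3) K)) where
  carrier := {F | Qmil K n * F + F * Qmil K n = 0}
  add_mem' := by
    intro f g hf hg
    have hf' : Qmil K n * f + f * Qmil K n = 0 := hf
    have hg' : Qmil K n * g + g * Qmil K n = 0 := hg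
    show Qmil K n * (f + g) + (f + g) * Qmil K n = 0
    rw [Matrix.mul_add, Matrix.add_mul,
      show Qmil K n * f + Qmil K n * g + (f * Qmil K n + g * Qmil K n)
          = (Qmil K n * f + f * Qmil K n) + (Qmil K n * g + g * Qmil K n) by abel,
      hf', hg', add_zero]
  mul_mem' := by
    intro f g hf hg
    have hf' : Qmil K n * f = f * Qmil K n := (closed_iff K n f).mp hf
    have hg' : Qmil K n * g = g * Qmil K n := (closed_iff K n g).mp hg
    show Qmil K n * (f * g) + (f * g) * Qmil K n = 0
    rw [closed_iff, ← Matrix.mul_assoc, hf', Matrix.mul_assoc, hg', Matrix.mul_assoc]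
  algebraMap_mem' := by
    intro r
    show Qmil K n * _ + _ * Qmil K n = 0
    rw [closed_iff]
    exact (Algebra.commutes' r (Qmil K n)).symm

/-- Two closed matrices are related when their difference is exact, of the form
`QG + GQ`. -/
def exactRel (f g : closedAlg K n) : Prop :=
  ∃ G : Matrix (Fin 2) (Fin 2) (MvPolynomial (Fin 3) K),
    (f : Matrix (Fin 2) (Fin 2) (MvPolynomial (Fin 3) K)) - g = Qmil K n * G + G * Qmil K n

/-- `End_H(Q)`: the quotient `K`-algebra of closed matrices modulo exact ones. -/
def EndH := RingQuot (exactRel K n)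

instance : Ring (EndH K n) := inferInstanceAs (Ring (RingQuot (exactRel K n)))
instance : Algebra K (EndH K n) := inferInstanceAs (Algebra K (RingQuot (exactRel K n)))


/-! ### Auxiliary development -/

set_option linter.unusedSectionVars false
set_option maxHeartbeats 1000000

abbrev Mat2 := Matrix (Fin 2) (Fin 2) (MvPolynomial (Fin 3) K)

lemma two_eq_zero3 : (2 : MvPolynomial (Fin 3) K) = 0 := by
  exact_mod_cast CharP.cast_eq_zero (MvPolynomial (Fin 3) K) 2

lemma two_eq_zero2 : (2 : MvPolynomial (Fin 2) K) = 0 := by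
  exact_mod_cast CharP.cast_eq_zero (MvPolynomial (Fin 2) K) 2

/-- `K[x,y,z] → K[x,z]`, sending `y ↦ 0`. -/
def psiH : MvPolynomial (Fin 3) K →ₐ[K] MvPolynomial (Fin 2) K := aeval ![X 0, 0, X 1]

/-- `K[x,z] → K[x,y,z]`. -/
def sigH : MvPolynomial (Fin 2) K →ₐ[K] MvPolynomial (Fin 3) K := aeval ![X 0, X 2]

/-- `K[x,y,z] → K[x,y,z]` setting `y := 0`. -/
def eH : MvPolynomial (Fin 3) K →ₐ[K] MvPolynomial (Fin 3) K := aeval ![X 0, 0, X 2]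

lemma sig_psi (p : MvPolynomial (Fin 3) K) : sigH K (psiH K p) = eH K p := by
  have h : (sigH K).comp (psiH K) = eH K := by
    apply MvPolynomial.algHom_ext
    intro i
    fin_cases i <;> simp [psiH, sigH, eH]
  exact congrFun (congrArg (↑·) h) p

lemma X1_dvd_sub_e (p : MvPolynomial (Fin 3) K) : (X 1 : MvPolynomial (Fin 3) K) ∣ p - eH K p := by
  induction p using MvPolynomial.induction_on with
  | C a => simp [eH]
  | add p q hp hq =>
      rw [map_add]
      have h : p + q - (eH K p + eH K q) = (p - eH K p) + (q - eH K q) := by ring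
      rw [h]; exact dvd_add hp hq
  | mul_X p i hp =>
      rw [map_mul]
      fin_cases i
      · show (X 1 : MvPolynomial (Fin 3) K) ∣ p * X 0 - eH K p * eH K (X 0)
        have h : p * X 0 - eH K p * eH K (X 0) = (p - eH K p) * X 0 := by simp [eH]; ring
        rw [h]; exact hp.mul_right _
      · show (X 1 : MvPolynomial (Fin 3) K) ∣ p * X 1 - eH K p * eH K (X 1)
        have h : eH K (X 1) = 0 := by simp [eH]
        rw [h, mul_zero, sub_zero]; exact dvd_mul_left _ _
      · show (X 1 : MvPolynomial (Fin 3) K) ∣ p * X 2 - eH K p * eH K (X 2)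
        have h : p * X 2 - eH K p * eH K (X 2) = (p - eH K p) * X 2 := by simp [eH]; ring
        rw [h]; exact hp.mul_right _

lemma X1_dvd_iff (p : MvPolynomial (Fin 3) K) :
    (X 1 : MvPolynomial (Fin 3) K) ∣ p ↔ eH K p = 0 := by
  constructor
  · rintro ⟨w, rfl⟩
    rw [map_mul, show eH K (X 1) = 0 by simp [eH], zero_mul]
  · intro h
    have hd := X1_dvd_sub_e K p
    rwa [h, sub_zero] at hd

section closedFacts

variable {K n}

lemma closed_rel {F : Mat2 K} (hF : F ∈ closedAlg K n) :
    (X 1 : MvPolynomial (Fin 3) K) * F 1 0 = (X 1 + X 0 * X 2) * F 0 1 := by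
  have hc := (closed_iff K n F).mp hF
  have h00 : (Qmil K n * F) 0 0 = (F * Qmil K n) 0 0 := by rw [hc]
  simp [Qmil, Matrix.mul_apply, Fin.sum_univ_two] at h00
  linear_combination h00

lemma closed_diag {F : Mat2 K} (hF : F ∈ closedAlg K n) : F 1 1 = F 0 0 := by
  have hc := (closed_iff K n F).mp hF
  have h01 : (Qmil K n * F) 0 1 = (F * Qmil K n) 0 1 := by rw [hc]
  simp [Qmil, Matrix.mul_apply, Fin.sum_univ_two] at h01
  have h : (X 1 : MvPolynomial (Fin 3) K) * F 1 1 = X 1 * F 0 0 := by linear_combination h01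
  exact mul_left_cancel₀ (X_ne_zero _) h

lemma closed_e01 {F : Mat2 K} (hF : F ∈ closedAlg K n) : eH K (F 0 1) = 0 := by
  have h := congrArg (eH K) (closed_rel hF)
  rw [map_mul, map_mul, map_add, map_mul, show eH K (X 1) = 0 by simp [eH],
    show eH K (X 0) = X 0 by simp [eH], show eH K (X 2) = X 2 by simp [eH],
    zero_mul, zero_add] at h
  rcases mul_eq_zero.mp h.symm with h' | h'
  · exact absurd h' (mul_ne_zero (X_ne_zero _) (X_ne_zero _))
  · exact h'

lemma closed_psi01 {F : Mat2 K} (hF : F ∈ closedAlg K n) : psiH K (F 0 1) = 0 := by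
  obtain ⟨t, ht⟩ := (X1_dvd_iff K _).mpr (closed_e01 hF)
  rw [ht, map_mul, show psiH K (X 1) = 0 by simp [psiH], zero_mul]

lemma closed_off {F : Mat2 K} (hF : F ∈ closedAlg K n) :
    ∃ t, F 0 1 = X 1 * t ∧ F 1 0 = (X 1 + X 0 * X 2) * t := by
  obtain ⟨t, ht⟩ := (X1_dvd_iff K _).mpr (closed_e01 hF)
  refine ⟨t, ht, ?_⟩
  have h := closed_rel hF
  rw [ht] at h
  have h' : (X 1 : MvPolynomial (Fin 3) K) * F 1 0 = X 1 * ((X 1 + X 0 * X 2) * t) := by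
    linear_combination h
  exact mul_left_cancel₀ (X_ne_zero _) h'

end closedFacts

lemma exact_xz :
    algebraMap (MvPolynomial (Fin 3) K) (Mat2 K) (X 0 * X 2) =
      Qmil K n * !![0, 1; 1, 0] + !![0, 1; 1, 0] * Qmil K n := by
  refine Matrix.ext fun i j => ?_
  have h2 := two_eq_zero3 K
  fin_cases i <;> fin_cases j <;>
    simp [Qmil, Matrix.mul_apply, Fin.sum_univ_two, Matrix.algebraMap_matrix_apply]
  · linear_combination (-(X 1 : MvPolynomial (Fin 3) K)) * h2
  · linear_combination (-(X 0 : MvPolynomial (Fin 3) K) ^ n) * h2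
  · linear_combination (-(X 0 : MvPolynomial (Fin 3) K) ^ n) * h2
  · linear_combination (-(X 1 : MvPolynomial (Fin 3) K)) * h2

lemma exact_main (F : Mat2 K) (hd : F 1 1 = F 0 0) (t w : MvPolynomial (Fin 3) K)
    (hb : F 0 1 = X 1 * t) (hc : F 1 0 = (X 1 + X 0 * X 2) * t)
    (hw : F 0 0 - eH K (F 0 0) = X 1 * w) :
    F - algebraMap (MvPolynomial (Fin 3) K) (Mat2 K) (eH K (F 0 0)) =
      Qmil K n * !![t, 0; w, 0] + !![t, 0; w, 0] * Qmil K n := by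
  have h2 := two_eq_zero3 K
  refine Matrix.ext fun i j => ?_
  fin_cases i <;> fin_cases j <;>
    simp [Qmil, Matrix.mul_apply, Fin.sum_univ_two, Matrix.algebraMap_matrix_apply,
      Matrix.sub_apply]
  · linear_combination hw - (X 0 ^ n * t) * h2
  · linear_combination hb
  · linear_combination hc - (X 0 ^ n * w) * h2
  · linear_combination hd + hw

/-- Scalar matrices, as elements of `M₂(K[x,y,z])`, coming from `K[x,z]`. -/
def sigM : MvPolynomial (Fin 2) K →ₐ[K] Mat2 K :=
  (IsScalarTower.toAlgHom K (MvPolynomial (Fin 3) K) (Mat2 K)).comp (sigH K)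

lemma sigM_mem (p : MvPolynomial (Fin 2) K) : sigM K p ∈ closedAlg K n := by
  show Qmil K n * sigM K p + sigM K p * Qmil K n = 0
  rw [closed_iff]
  exact (Algebra.commutes (sigH K p) (Qmil K n)).symm

/-- Scalar matrices as closed matrices. -/
def tauH : MvPolynomial (Fin 2) K →ₐ[K] closedAlg K n :=
  (sigM K).codRestrict (closedAlg K n) (sigM_mem K n)

lemma tauH_coe (p : MvPolynomial (Fin 2) K) :
    (tauH K n p : Mat2 K) = algebraMap (MvPolynomial (Fin 3) K) (Mat2 K) (sigH K p) := rfl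

lemma Qmil00 : Qmil K n 0 0 = X 0 ^ n := by simp [Qmil]
lemma Qmil01 : Qmil K n 0 1 = X 1 := by simp [Qmil]
lemma Qmil10 : Qmil K n 1 0 = X 1 + X 0 * X 2 := by simp [Qmil]
lemma Qmil11 : Qmil K n 1 1 = X 0 ^ n := by simp [Qmil]

lemma psiH_X0 : psiH K (X 0) = X 0 := by simp [psiH]
lemma psiH_X1 : psiH K (X 1) = 0 := by simp [psiH]
lemma psiH_X2 : psiH K (X 2) = X 1 := by simp [psiH]

/-- The `(0,0)`-entry map, with `y` set to `0`: an algebra map on closed matrices. -/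
def phi0 : closedAlg K n →ₐ[K] MvPolynomial (Fin 2) K where
  toFun F := psiH K ((F : Mat2 K) 0 0)
  map_one' := by simp
  map_mul' F G := by
    have h : ((F * G : closedAlg K n) : Mat2 K) 0 0
        = (F : Mat2 K) 0 0 * (G : Mat2 K) 0 0 + (F : Mat2 K) 0 1 * (G : Mat2 K) 1 0 := by
      rw [MulMemClass.coe_mul, Matrix.mul_apply, Fin.sum_univ_two]
    rw [h, map_add, map_mul, map_mul, closed_psi01 F.2, zero_mul, add_zero]
  map_zero' := by simp
  map_add' F G := by
    rw [AddMemClass.coe_add, Matrix.add_apply, map_add]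
  commutes' r := by
    have h : ((algebraMap K (closedAlg K n)) r : Mat2 K) 0 0 = algebraMap K _ r := by
      simp [Matrix.algebraMap_matrix_apply]
    rw [h, AlgHom.commutes]

/-- Closed matrices to `K[x,z]/(xz)`. -/
def phiH : closedAlg K n →ₐ[K]
    (MvPolynomial (Fin 2) K ⧸ Ideal.span {(X 0 : MvPolynomial (Fin 2) K) * X 1}) :=
  (Ideal.Quotient.mkₐ K _).comp (phi0 K n)

lemma phi_rel : ∀ ⦃f g : closedAlg K n⦄, exactRel K n f g → phiH K n f = phiH K n g := by
  intro f g h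
  obtain ⟨G, hG⟩ := h
  have h00 : (f : Mat2 K) 0 0 - (g : Mat2 K) 0 0
      = (Qmil K n * G + G * Qmil K n) 0 0 := by
    have := congrFun (congrFun hG 0) 0
    simpa [Matrix.sub_apply] using this
  have key : psiH K ((Qmil K n * G + G * Qmil K n) 0 0)
      = X 0 * X 1 * psiH K (G 0 1) := by
    have h2 := two_eq_zero2 K
    simp only [Matrix.add_apply, Matrix.mul_apply, Fin.sum_univ_two, Qmil00, Qmil01, Qmil10,
      Qmil11, map_add, map_mul, map_pow, psiH_X0, psiH_X1, psiH_X2]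
    linear_combination (X 0 ^ n * psiH K (G 0 0)) * h2
  have hsub : psiH K ((f : Mat2 K) 0 0) - psiH K ((g : Mat2 K) 0 0)
      = X 0 * X 1 * psiH K (G 0 1) := by
    rw [← key, ← map_sub, h00]
  have : phiH K n f - phiH K n g = 0 := by
    show Ideal.Quotient.mk _ (psiH K ((f : Mat2 K) 0 0))
        - Ideal.Quotient.mk _ (psiH K ((g : Mat2 K) 0 0)) = 0
    rw [← map_sub, hsub, Ideal.Quotient.eq_zero_iff_mem]
    exact Ideal.mem_span_singleton.mpr ⟨psiH K (G 0 1), rfl⟩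
  exact sub_eq_zero.mp this

/-- `End_H(Q) → K[x,z]/(xz)`. -/
def PhiH : RingQuot (exactRel K n) →ₐ[K]
    (MvPolynomial (Fin 2) K ⧸ Ideal.span {(X 0 : MvPolynomial (Fin 2) K) * X 1}) :=
  RingQuot.liftAlgHom K ⟨phiH K n, phi_rel K n⟩

/-- `K[x,z] → End_H(Q)`. -/
def thetaH : MvPolynomial (Fin 2) K →ₐ[K] RingQuot (exactRel K n) :=
  (RingQuot.mkAlgHom K (exactRel K n)).comp (tauH K n)

lemma theta_vanish : ∀ a ∈ Ideal.span {(X 0 : MvPolynomial (Fin 2) K) * X 1},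
    thetaH K n a = 0 := by
  have hxz : thetaH K n (X 0 * X 1) = 0 := by
    have hrel : exactRel K n (tauH K n (X 0 * X 1)) 0 := by
      refine ⟨!![0, 1; 1, 0], ?_⟩
      have hs : sigH K (X 0 * X 1) = X 0 * X 2 := by simp [sigH]
      rw [ZeroMemClass.coe_zero, sub_zero, tauH_coe, hs]
      exact exact_xz K n
    have h := RingQuot.mkAlgHom_rel K hrel
    rw [map_zero] at h
    exact h
  intro a ha
  obtain ⟨c, rfl⟩ := Ideal.mem_span_singleton.mp ha
  rw [map_mul, hxz, zero_mul]

/-- `K[x,z]/(xz) → End_H(Q)`. -/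
def PsiH : (MvPolynomial (Fin 2) K ⧸ Ideal.span {(X 0 : MvPolynomial (Fin 2) K) * X 1})
    →ₐ[K] RingQuot (exactRel K n) :=
  Ideal.Quotient.liftₐ _ (thetaH K n) (theta_vanish K n)

lemma comp1 : (PhiH K n).comp (PsiH K n) = AlgHom.id K _ := by
  refine Ideal.Quotient.algHom_ext K (MvPolynomial.algHom_ext fun i => ?_)
  have key : ∀ j : Fin 2, (PhiH K n) ((PsiH K n) (Ideal.Quotient.mk _ (X j)))
      = Ideal.Quotient.mk _ (X j) := by
    intro j
    have h1 : (PsiH K n) (Ideal.Quotient.mk _ (X j)) =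
        RingQuot.mkAlgHom K (exactRel K n) (tauH K n (X j)) := rfl
    rw [h1]
    have h2 : (PhiH K n) (RingQuot.mkAlgHom K (exactRel K n) (tauH K n (X j)))
        = phiH K n (tauH K n (X j)) := by
      exact RingQuot.liftAlgHom_mkAlgHom_apply K _ _ _
    rw [h2]
    show Ideal.Quotient.mk _ (psiH K ((tauH K n (X j) : Mat2 K) 0 0)) = _
    have h3 : ((tauH K n (X j) : Mat2 K)) 0 0 = sigH K (X j) := by
      rw [tauH_coe]
      simp [Matrix.algebraMap_matrix_apply]
    rw [h3]
    congr 1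
    fin_cases j <;> simp [sigH, psiH_X0, psiH_X2]
  simpa using key i

lemma comp2 : (PsiH K n).comp (PhiH K n) = AlgHom.id K _ := by
  apply AlgHom.ext
  intro x
  obtain ⟨F, rfl⟩ := RingQuot.mkAlgHom_surjective K (exactRel K n) x
  have h2 : (PhiH K n) (RingQuot.mkAlgHom K (exactRel K n) F) = phiH K n F :=
    RingQuot.liftAlgHom_mkAlgHom_apply K _ _ _
  rw [AlgHom.comp_apply, h2]
  have h3 : (PsiH K n) (phiH K n F)
      = RingQuot.mkAlgHom K (exactRel K n) (tauH K n (psiH K ((F : Mat2 K) 0 0))) := rfl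
  rw [h3, AlgHom.id_apply]
  refine (RingQuot.mkAlgHom_rel K ?_).symm
  show exactRel K n F (tauH K n (psiH K ((F : Mat2 K) 0 0)))
  obtain ⟨t, hb, hc⟩ := closed_off F.2
  obtain ⟨w, hw⟩ := X1_dvd_sub_e K ((F : Mat2 K) 0 0)
  refine ⟨!![t, 0; w, 0], ?_⟩
  rw [tauH_coe, sig_psi]
  exact exact_main K n (F : Mat2 K) (closed_diag F.2) t w hb hc hw

/-- For `n ≥ 1`, the endomorphism algebra `End_H(Q)` of the ungraded
matrix factorization `Q = [[xⁿ, y], [y + xz, xⁿ]]` of `W = x^{2n} + y² + xyz` is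
isomorphic as a `K`-algebra to `K[x,z]/(xz)`. -/
theorem endH_Qmil_iso (hn : 1 ≤ n) :
    Nonempty (EndH K n ≃ₐ[K]
      (MvPolynomial (Fin 2) K ⧸
        Ideal.span {(X 0 : MvPolynomial (Fin 2) K) * X 1})) := by
  exact ⟨AlgEquiv.ofAlgHom (PhiH K n) (PsiH K n) (comp1 K n) (comp2 K n)⟩

end
end

section
/- Let A be a commutative ring in which 2 = 0 and W ∈ A. Let Q₀, Q₁ be k×k matrices over A with Q₀Q₁ = Q₁Q₀ = W·Id_k (a ℤ/2-graded matrix factorization X), and let Q' be an m×m matrix over A with Q'² = W·Id_m (an ungraded matrix factorization Y). Set Qₓ = [[0, Q₀], [Q₁, 0]] (the 2k×2k matrix of the ungraded factorization 𝔉(X)) and Q_D = [[0, Q'], [Q', 0]] (the 2m×2m matrix of the doubling 𝔇(Y)). Then the assignment sending an m×2k matrix f = (f₀ | f₁) (with m×k blocks f₀, f₁) to the block-diagonal 2m×2k matrix [[f₀, 0], [0, f₁]] induces a K-linear (A-linear) bijection between: (a) the quotient of {f ∈ M_{m×2k}(A) : Q'f = f·Qₓ} by {Q'g + g·Qₓ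 : g ∈ M_{m×2k}(A)}, and (b) the quotient of the set of even morphisms φ = [[a, 0],[0, d]] ∈ M_{2m×2k}(A) satisfying Q_D·φ = φ·Qₓ by the set of elements Q_D·ψ + ψ·Qₓ where ψ = [[0, b],[c, 0]] ranges over odd (anti-block-diagonal) 2m×2k matrices. (This is the adjunction isomorphism Hom_{H(MF^{un})}(𝔉(X), Y) ≅ Hom_{H⁰(MF)}(X, 𝔇(Y)).) -/
noncomputable section

variable {A : Type*} [CommRing A] {k m : ℕ}

/-- The block matrix `[[0, Q₀], [Q₁, 0]]` of a ℤ/2-graded matrix factorization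
`X = (Q₀, Q₁)`, viewed (after forgetting the grading) as the ungraded factorization
`𝔉(X)`. -/
def QX (Q₀ Q₁ : Matrix (Fin k) (Fin k) A) :
    Matrix (Fin k ⊕ Fin k) (Fin k ⊕ Fin k) A :=
  Matrix.fromBlocks 0 Q₀ Q₁ 0

/-- The block matrix `[[0, Q'], [Q', 0]]` of the doubling `𝔇(Y)` of an ungraded
factorization `Y = Q'`. -/
def QD (Q' : Matrix (Fin m) (Fin m) A) :
    Matrix (Fin m ⊕ Fin m) (Fin m ⊕ Fin m) A :=
  Matrix.fromBlocks 0 Q' Q' 0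

/-- Closed morphisms `𝔉(X) → Y` between ungraded factorizations: `m×2k` matrices `f`
with `Q'·f = f·Qₓ`. -/
def closedUn (Q' : Matrix (Fin m) (Fin m) A) (Q₀ Q₁ : Matrix (Fin k) (Fin k) A) :
    Submodule A (Matrix (Fin m) (Fin k ⊕ Fin k) A) where
  carrier := {f | Q' * f = f * QX Q₀ Q₁}
  add_mem' := by
    intro f g hf hg
    have hf' : Q' * f = f * QX Q₀ Q₁ := hf
    have hg' : Q' * g = g * QX Q₀ Q₁ := hg
    show Q' * (f + g) = (f + g) * QX Q₀ Q₁
    rw [Matrix.mul_add, Matrix.add_mul, hf', hg']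
  zero_mem' := by show Q' * 0 = 0 * QX Q₀ Q₁; simp
  smul_mem' := by
    intro a f hf
    have hf' : Q' * f = f * QX Q₀ Q₁ := hf
    show Q' * (a • f) = (a • f) * QX Q₀ Q₁
    rw [Matrix.mul_smul, Matrix.smul_mul, hf']

/-- Exact morphisms `𝔉(X) → Y`: matrices of the form `Q'·g + g·Qₓ`. -/
def exactUn (Q' : Matrix (Fin m) (Fin m) A) (Q₀ Q₁ : Matrix (Fin k) (Fin k) A) :
    Submodule A (Matrix (Fin m) (Fin k ⊕ Fin k) A) where
  carrier := {f | ∃ g : Matrix (Fin m) (Fin k ⊕ Fin k) A, f = Q' * g + g * QX Q₀ Q₁}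
  add_mem' := by
    rintro f g ⟨u, hu⟩ ⟨v, hv⟩
    exact ⟨u + v, by rw [hu, hv, Matrix.mul_add, Matrix.add_mul]; abel⟩
  zero_mem' := ⟨0, by simp⟩
  smul_mem' := by
    rintro a f ⟨u, hu⟩
    exact ⟨a • u, by rw [hu]; simp [Matrix.mul_smul, Matrix.smul_mul, smul_add]⟩

/-- Closed even morphisms `X → 𝔇(Y)` between graded factorizations: block-diagonal
`2m×2k` matrices `φ` with `Q_D·φ = φ·Qₓ`. -/
def closedEv (Q' : Matrix (Fin m) (Fin m) A) (Q₀ Q₁ : Matrix (Fin k) (Fin k) A) :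
    Submodule A (Matrix (Fin m ⊕ Fin m) (Fin k ⊕ Fin k) A) where
  carrier := {φ | QD Q' * φ = φ * QX Q₀ Q₁ ∧ φ.toBlocks₁₂ = 0 ∧ φ.toBlocks₂₁ = 0}
  add_mem' := by
    rintro φ ψ ⟨hφ, hφ12, hφ21⟩ ⟨hψ, hψ12, hψ21⟩
    refine ⟨?_, ?_, ?_⟩
    · rw [Matrix.mul_add, Matrix.add_mul, hφ, hψ]
    · refine Matrix.ext fun i j => ?_
      have h1 := congrFun (congrFun hφ12 i) j
      have h2 := congrFun (congrFun hψ12 i) j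
      simp only [Matrix.toBlocks₁₂, Matrix.of_apply, Matrix.add_apply,
        Matrix.zero_apply] at h1 h2 ⊢
      rw [h1, h2, add_zero]
    · refine Matrix.ext fun i j => ?_
      have h1 := congrFun (congrFun hφ21 i) j
      have h2 := congrFun (congrFun hψ21 i) j
      simp only [Matrix.toBlocks₂₁, Matrix.of_apply, Matrix.add_apply,
        Matrix.zero_apply] at h1 h2 ⊢
      rw [h1, h2, add_zero]
  zero_mem' := by
    refine ⟨by simp, ?_, ?_⟩ <;>
      · refine Matrix.ext fun i j => ?_
        simp [Matrix.toBlocks₁₂, Matrix.toBlocks₂₁]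
  smul_mem' := by
    rintro a φ ⟨hφ, hφ12, hφ21⟩
    refine ⟨by rw [Matrix.mul_smul, Matrix.smul_mul, hφ], ?_, ?_⟩
    · refine Matrix.ext fun i j => ?_
      have h1 := congrFun (congrFun hφ12 i) j
      simp only [Matrix.toBlocks₁₂, Matrix.of_apply, Matrix.smul_apply,
        Matrix.zero_apply] at h1 ⊢
      rw [h1, smul_zero]
    · refine Matrix.ext fun i j => ?_
      have h1 := congrFun (congrFun hφ21 i) j
      simp only [Matrix.toBlocks₂₁, Matrix.of_apply, Matrix.smul_apply,
        Matrix.zero_apply] at h1 ⊢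
      rw [h1, smul_zero]

/-- Even morphisms `X → 𝔇(Y)` that are exact: of the form `Q_D·ψ + ψ·Qₓ` for an odd
(anti-block-diagonal) `ψ`. -/
def exactEv (Q' : Matrix (Fin m) (Fin m) A) (Q₀ Q₁ : Matrix (Fin k) (Fin k) A) :
    Submodule A (Matrix (Fin m ⊕ Fin m) (Fin k ⊕ Fin k) A) where
  carrier := {φ | ∃ ψ : Matrix (Fin m ⊕ Fin m) (Fin k ⊕ Fin k) A,
    ψ.toBlocks₁₁ = 0 ∧ ψ.toBlocks₂₂ = 0 ∧ φ = QD Q' * ψ + ψ * QX Q₀ Q₁}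
  add_mem' := by
    rintro φ₁ φ₂ ⟨u, hu1, hu2, hu⟩ ⟨v, hv1, hv2, hv⟩
    refine ⟨u + v, ?_, ?_, by rw [hu, hv, Matrix.mul_add, Matrix.add_mul]; abel⟩
    · refine Matrix.ext fun i j => ?_
      have h1 := congrFun (congrFun hu1 i) j
      have h2 := congrFun (congrFun hv1 i) j
      simp only [Matrix.toBlocks₁₁, Matrix.of_apply, Matrix.add_apply,
        Matrix.zero_apply] at h1 h2 ⊢
      rw [h1, h2, add_zero]
    · refine Matrix.ext fun i j => ?_
      have h1 := congrFun (congrFun hu2 i) j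
      have h2 := congrFun (congrFun hv2 i) j
      simp only [Matrix.toBlocks₂₂, Matrix.of_apply, Matrix.add_apply,
        Matrix.zero_apply] at h1 h2 ⊢
      rw [h1, h2, add_zero]
  zero_mem' := by
    refine ⟨0, ?_, ?_, by simp⟩ <;>
      · refine Matrix.ext fun i j => ?_
        simp [Matrix.toBlocks₁₁, Matrix.toBlocks₂₂]
  smul_mem' := by
    rintro a φ ⟨u, hu1, hu2, hu⟩
    refine ⟨a • u, ?_, ?_, by rw [hu]; simp [Matrix.mul_smul, Matrix.smul_mul, smul_add]⟩
    · refine Matrix.ext fun i j => ?_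
      have h1 := congrFun (congrFun hu1 i) j
      simp only [Matrix.toBlocks₁₁, Matrix.of_apply, Matrix.smul_apply,
        Matrix.zero_apply] at h1 ⊢
      rw [h1, smul_zero]
    · refine Matrix.ext fun i j => ?_
      have h1 := congrFun (congrFun hu2 i) j
      simp only [Matrix.toBlocks₂₂, Matrix.of_apply, Matrix.smul_apply,
        Matrix.zero_apply] at h1 ⊢
      rw [h1, smul_zero]

/-!
Closed and exact morphisms `𝔉(X) → Y` are `m × 2k` matrices `f = (f₀ | f₁)`; placing the two
column blocks on the diagonal, `f ↦ [[f₀, 0], [0, f₁]]`, or on the antidiagonal,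
`g ↦ [[0, g₁], [g₀, 0]]`, identifies such matrices with even, resp. odd, `2m × 2k` matrices.
Because `Q_D` and `Qₓ` are both antidiagonal, multiplying by either of them swaps these two
embeddings: `Q_D · diag(f) = antidiag(Q' f)`, `diag(f) · Qₓ = antidiag(f Qₓ)`, and symmetrically
with the roles of `diag` and `antidiag` exchanged. Hence the diagonal embedding carries the
closed (resp. exact) morphisms `𝔉(X) → Y` exactly onto the closed (resp. exact) even morphisms
`X → 𝔇(Y)`, and, being injective, it induces an isomorphism of the quotients.
-/

open Matrix

theorem exists_linearEquiv_subquotient_of_injective {R M N : Type*} [Ring R]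
    [AddCommGroup M] [Module R M] [AddCommGroup N] [Module R N]
    {L : M →ₗ[R] N} (hL : Function.Injective L) {C E : Submodule R M} {C' E' : Submodule R N}
    (hC : C.map L = C') (hE : E.map L = E') :
    ∃ e : (C ⧸ E.comap C.subtype) ≃ₗ[R] (C' ⧸ E'.comap C'.subtype),
      ∀ (x : C) (y : C'), L x = y → e (Submodule.Quotient.mk x) = Submodule.Quotient.mk y := by
  subst hC hE
  refine ⟨Submodule.Quotient.equiv _ _ (Submodule.equivMapOfInjective L hL C) ?_, ?_⟩
  · ext ⟨_, x, hxC, rfl⟩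
    simp only [Submodule.mem_map, Submodule.mem_comap, Submodule.subtype_apply]
    constructor
    · rintro ⟨x', hx'E, hx'⟩
      exact ⟨x', hx'E, congrArg Subtype.val hx'⟩
    · rintro ⟨x', hx'E, hx'⟩
      exact ⟨⟨x, hxC⟩, hL hx' ▸ hx'E, rfl⟩
  · intro x y hxy
    rw [Submodule.Quotient.equiv_apply, Submodule.mapQ_apply]
    exact congrArg _ (Subtype.ext hxy)

section BlockEmbeddings

variable {R : Type*} [CommSemiring R] {l n₁ n₂ : Type*}

def blockDiagOfCols : Matrix l (n₁ ⊕ n₂) R →ₗ[R] Matrix (l ⊕ l) (n₁ ⊕ n₂) R where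
  toFun f := fromBlocks f.toCols₁ 0 0 f.toCols₂
  map_add' f g := by ext (i | i) (j | j) <;> simp
  map_smul' c f := by ext (i | i) (j | j) <;> simp

def blockAntidiagOfCols : Matrix l (n₁ ⊕ n₂) R →ₗ[R] Matrix (l ⊕ l) (n₁ ⊕ n₂) R where
  toFun g := fromBlocks 0 g.toCols₂ g.toCols₁ 0
  map_add' f g := by ext (i | i) (j | j) <;> simp
  map_smul' c f := by ext (i | i) (j | j) <;> simp

theorem blockDiagOfCols_apply (f : Matrix l (n₁ ⊕ n₂) R) :
    blockDiagOfCols f = fromBlocks f.toCols₁ 0 0 f.toCols₂ := rfl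

theorem blockAntidiagOfCols_apply (g : Matrix l (n₁ ⊕ n₂) R) :
    blockAntidiagOfCols g = fromBlocks 0 g.toCols₂ g.toCols₁ 0 := rfl

theorem blockDiagOfCols_injective :
    Function.Injective (blockDiagOfCols : Matrix l (n₁ ⊕ n₂) R →ₗ[R] _) := by
  intro f g h
  rw [blockDiagOfCols_apply, blockDiagOfCols_apply, fromBlocks_inj] at h
  rw [← fromCols_toCols f, ← fromCols_toCols g, h.1, h.2.2.2]

theorem blockAntidiagOfCols_injective :
    Function.Injective (blockAntidiagOfCols : Matrix l (n₁ ⊕ n₂) R →ₗ[R] _) := by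
  intro f g h
  rw [blockAntidiagOfCols_apply, blockAntidiagOfCols_apply, fromBlocks_inj] at h
  rw [← fromCols_toCols f, ← fromCols_toCols g, h.2.2.1, h.2.1]

theorem mem_range_blockDiagOfCols_iff {φ : Matrix (l ⊕ l) (n₁ ⊕ n₂) R} :
    φ ∈ LinearMap.range blockDiagOfCols ↔ φ.toBlocks₁₂ = 0 ∧ φ.toBlocks₂₁ = 0 := by
  constructor
  · rintro ⟨f, rfl⟩
    exact ⟨toBlocks_fromBlocks₁₂ .., toBlocks_fromBlocks₂₁ ..⟩
  · rintro ⟨h₁₂, h₂₁⟩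
    refine ⟨fromCols φ.toBlocks₁₁ φ.toBlocks₂₂, ?_⟩
    rw [blockDiagOfCols_apply, toCols₁_fromCols, toCols₂_fromCols, ← h₁₂, ← h₂₁,
      fromBlocks_toBlocks]

theorem mem_range_blockAntidiagOfCols_iff {ψ : Matrix (l ⊕ l) (n₁ ⊕ n₂) R} :
    ψ ∈ LinearMap.range blockAntidiagOfCols ↔ ψ.toBlocks₁₁ = 0 ∧ ψ.toBlocks₂₂ = 0 := by
  constructor
  · rintro ⟨g, rfl⟩
    exact ⟨toBlocks_fromBlocks₁₁ .., toBlocks_fromBlocks₂₂ ..⟩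
  · rintro ⟨h₁₁, h₂₂⟩
    refine ⟨fromCols ψ.toBlocks₂₁ ψ.toBlocks₁₂, ?_⟩
    rw [blockAntidiagOfCols_apply, toCols₁_fromCols, toCols₂_fromCols, ← h₁₁, ← h₂₂,
      fromBlocks_toBlocks]

end BlockEmbeddings

section Intertwining

variable (Q' : Matrix (Fin m) (Fin m) A) (Q₀ Q₁ : Matrix (Fin k) (Fin k) A)

theorem QD_mul_blockDiagOfCols (f : Matrix (Fin m) (Fin k ⊕ Fin k) A) :
    QD Q' * blockDiagOfCols f = blockAntidiagOfCols (Q' * f) := by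
  ext (i | i) (j | j) <;> simp [QD, blockDiagOfCols_apply, blockAntidiagOfCols_apply, mul_apply]

theorem QD_mul_blockAntidiagOfCols (g : Matrix (Fin m) (Fin k ⊕ Fin k) A) :
    QD Q' * blockAntidiagOfCols g = blockDiagOfCols (Q' * g) := by
  ext (i | i) (j | j) <;> simp [QD, blockDiagOfCols_apply, blockAntidiagOfCols_apply, mul_apply]

theorem blockDiagOfCols_mul_QX (f : Matrix (Fin m) (Fin k ⊕ Fin k) A) :
    blockDiagOfCols f * QX Q₀ Q₁ = blockAntidiagOfCols (f * QX Q₀ Q₁) := by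
  ext (i | i) (j | j) <;>
    simp [QX, blockDiagOfCols_apply, blockAntidiagOfCols_apply, mul_apply, Fintype.sum_sum_type]

theorem blockAntidiagOfCols_mul_QX (g : Matrix (Fin m) (Fin k ⊕ Fin k) A) :
    blockAntidiagOfCols g * QX Q₀ Q₁ = blockDiagOfCols (g * QX Q₀ Q₁) := by
  ext (i | i) (j | j) <;>
    simp [QX, blockDiagOfCols_apply, blockAntidiagOfCols_apply, mul_apply, Fintype.sum_sum_type]

theorem map_blockDiagOfCols_closedUn :
    (closedUn Q' Q₀ Q₁).map blockDiagOfCols = closedEv Q' Q₀ Q₁ := by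
  ext φ
  constructor
  · rintro ⟨f, hf, rfl⟩
    refine ⟨?_, mem_range_blockDiagOfCols_iff.mp ⟨f, rfl⟩⟩
    rw [QD_mul_blockDiagOfCols, blockDiagOfCols_mul_QX]
    exact congrArg _ hf
  · rintro ⟨hφ, h₁₂, h₂₁⟩
    obtain ⟨f, rfl⟩ := mem_range_blockDiagOfCols_iff.mpr ⟨h₁₂, h₂₁⟩
    rw [QD_mul_blockDiagOfCols, blockDiagOfCols_mul_QX] at hφ
    exact ⟨f, blockAntidiagOfCols_injective hφ, rfl⟩

theorem map_blockDiagOfCols_exactUn :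
    (exactUn Q' Q₀ Q₁).map blockDiagOfCols = exactEv Q' Q₀ Q₁ := by
  ext φ
  constructor
  · rintro ⟨_, ⟨g, rfl⟩, rfl⟩
    obtain ⟨h₁₁, h₂₂⟩ := mem_range_blockAntidiagOfCols_iff.mp ⟨g, rfl⟩
    refine ⟨blockAntidiagOfCols g, h₁₁, h₂₂, ?_⟩
    rw [QD_mul_blockAntidiagOfCols, blockAntidiagOfCols_mul_QX, map_add]
  · rintro ⟨ψ, h₁₁, h₂₂, rfl⟩
    obtain ⟨g, rfl⟩ := mem_range_blockAntidiagOfCols_iff.mpr ⟨h₁₁, h₂₂⟩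
    refine ⟨_, ⟨g, rfl⟩, ?_⟩
    rw [QD_mul_blockAntidiagOfCols, blockAntidiagOfCols_mul_QX, map_add]

end Intertwining

theorem adjunction_forget_double_general
    (Q₀ Q₁ : Matrix (Fin k) (Fin k) A)
    (Q' : Matrix (Fin m) (Fin m) A) :
    ∃ e : (closedUn Q' Q₀ Q₁ ⧸
            (exactUn Q' Q₀ Q₁).comap (closedUn Q' Q₀ Q₁).subtype) ≃ₗ[A]
          (closedEv Q' Q₀ Q₁ ⧸
            (exactEv Q' Q₀ Q₁).comap (closedEv Q' Q₀ Q₁).subtype),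
      ∀ (f : closedUn Q' Q₀ Q₁) (φ : closedEv Q' Q₀ Q₁),
        (φ : Matrix (Fin m ⊕ Fin m) (Fin k ⊕ Fin k) A).toBlocks₁₁ =
          (f : Matrix (Fin m) (Fin k ⊕ Fin k) A).submatrix id Sum.inl →
        (φ : Matrix (Fin m ⊕ Fin m) (Fin k ⊕ Fin k) A).toBlocks₂₂ =
          (f : Matrix (Fin m) (Fin k ⊕ Fin k) A).submatrix id Sum.inr →
        e (Submodule.Quotient.mk f) = Submodule.Quotient.mk φ := by
  obtain ⟨e, he⟩ := exists_linearEquiv_subquotient_of_injective blockDiagOfCols_injective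
    (map_blockDiagOfCols_closedUn Q' Q₀ Q₁) (map_blockDiagOfCols_exactUn Q' Q₀ Q₁)
  refine ⟨e, fun f φ h₁₁ h₂₂ => he f φ ?_⟩
  obtain ⟨-, h₁₂, h₂₁⟩ := φ.2
  rw [← fromBlocks_toBlocks (φ : Matrix (Fin m ⊕ Fin m) (Fin k ⊕ Fin k) A), h₁₁, h₁₂, h₂₁, h₂₂]
  rfl

/-- (Adjunction `Hom_{H(MF^{un})}(𝔉(X), Y) ≅ Hom_{H⁰(MF)}(X, 𝔇(Y))`.)
Over a commutative ring `A` with `2 = 0`, given a ℤ/2-graded matrix factorization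
`X = (Q₀, Q₁)` of `W` (size `k`) and an ungraded matrix factorization `Y = Q'` of `W`
(size `m`), the assignment `f = (f₀ | f₁) ↦ [[f₀, 0], [0, f₁]]` induces an `A`-linear
bijection between closed-mod-exact morphisms `𝔉(X) → Y` and closed-mod-exact even
morphisms `X → 𝔇(Y)`. -/
theorem adjunction_forget_double (h2 : (2 : A) = 0) (W : A)
    (Q₀ Q₁ : Matrix (Fin k) (Fin k) A)
    (h01 : Q₀ * Q₁ = W • (1 : Matrix (Fin k) (Fin k) A))
    (h10 : Q₁ * Q₀ = W • (1 : Matrix (Fin k) (Fin k) A))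
    (Q' : Matrix (Fin m) (Fin m) A)
    (hQ' : Q' * Q' = W • (1 : Matrix (Fin m) (Fin m) A)) :
    ∃ e : (closedUn Q' Q₀ Q₁ ⧸
            (exactUn Q' Q₀ Q₁).comap (closedUn Q' Q₀ Q₁).subtype) ≃ₗ[A]
          (closedEv Q' Q₀ Q₁ ⧸
            (exactEv Q' Q₀ Q₁).comap (closedEv Q' Q₀ Q₁).subtype),
      ∀ (f : closedUn Q' Q₀ Q₁) (φ : closedEv Q' Q₀ Q₁),
        (φ : Matrix (Fin m ⊕ Fin m) (Fin k ⊕ Fin k) A).toBlocks₁₁ =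
          (f : Matrix (Fin m) (Fin k ⊕ Fin k) A).submatrix id Sum.inl →
        (φ : Matrix (Fin m ⊕ Fin m) (Fin k ⊕ Fin k) A).toBlocks₂₂ =
          (f : Matrix (Fin m) (Fin k ⊕ Fin k) A).submatrix id Sum.inr →
        e (Submodule.Quotient.mk f) = Submodule.Quotient.mk φ :=
  adjunction_forget_double_general Q₀ Q₁ Q'

end
end
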